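/- Let φ = φ_1 ∧ … ∧ φ_k be a propositional formula in 3CNF over propositions x_1,…,x_n. Define the Boolean conjunctive query Q with head H() and body {Form(f,t,u)} ∪ {Clause_j(f,t,u) | 1 ≤ j ≤ k} ∪ {Clause_j(t,f,u) | 1 ≤ j ≤ k} ∪ ⋃_{i=1}^n {Neg_i(f,t,u), Neg_i(t,f,u)}, over variables f, t, u. Define the view V with head H(f,t,x_1,x̄_1,…,x_n,x̄_n) and body {Form(f,t,u)} ∪ {Clause_j(f,t,u) | 1 ≤ j ≤ k} ∪ ⋃_{i=1}^n ( {Neg_i(x_i,x̄_i,u), Neg_i(x̄_i,x_i,u)} ∪ {Clause_j(x_i,x̄_i,u) | the positive literal x_i occurs in clause φ_j} ∪ {Clause_j(x̄_i,x_i,u) | the negated literal ¬x_i occurs in clause φ_j} ). Then Q and V are hierarchical, and φ is satisfiable if and only if there exist an application α of V and a mapping ψ such that (body(Q), V, α, ψ) is a cover description for Q. -/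

import Mathlib

/-!
Every atom of `Q` and of `V` contains `u`, and its two other variables form one of the pairs
`{f, t}` or `{x_i, x̄_i}`; this makes both queries hierarchical.

A satisfying assignment `τ` gives the application of `V` that fixes `f, t, u` and sends
`x_i, x̄_i` to `t, f` or to `f, t` according to `τ`: it maps `body(V)` onto `body(Q)`, each
`Clause_j(t, f, u)` being the image of an atom of a literal of `φ_j` made true by `τ`, and
`ψ = id` completes the cover description since `Q` is Boolean and so has no bridge variables.
Conversely, covering `Form(f, t, u)` forces `α(f) = f`, so `Clause_j(t, f, u)` can only be the
image of a literal atom of `φ_j` whose variables go to `t, f`: that literal is true under the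
assignment `x_i ↦ (α(x_i) = t)`.
-/


/-- A relational atom (or fact): a relation symbol with a list of arguments.
Arguments are natural numbers, serving both as variables and as data values. -/
structure Atom where
  rel : ℕ
  args : List ℕ
deriving DecidableEq

/-- Apply a substitution to an atom. -/
def mapAtom (f : ℕ → ℕ) (A : Atom) : Atom := ⟨A.rel, A.args.map f⟩

/-- The variables of an atom. -/
def Atom.vars (A : Atom) : Finset ℕ := A.args.toFinset

/-- The variables of a finite set of atoms. -/
def varsOf (B : Finset Atom) : Finset ℕ := B.biUnion Atom.vars

/-- A conjunctive query: a head atom and a finite set of body atoms. -/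
structure CQ where
  head : Atom
  body : Finset Atom
deriving DecidableEq

/-- All variables of a conjunctive query. -/
def CQ.vars (Q : CQ) : Finset ℕ := Q.head.vars ∪ varsOf Q.body

/-- A schema: a set of relation symbols together with an arity function. -/
structure Schema where
  rels : Set ℕ
  ar : ℕ → ℕ

/-- An atom (or fact) over a schema. -/
def atomOver (σ : Schema) (A : Atom) : Prop :=
  A.rel ∈ σ.rels ∧ A.args.length = σ.ar A.rel

/-- `Q` is a (well-formed) conjunctive query over schema `σ`:
nonempty body of σ-atoms, head relation symbol not in σ, and safety. -/
def isCQ (σ : Schema) (Q : CQ) : Prop :=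
  Q.body.Nonempty ∧ (∀ A ∈ Q.body, atomOver σ A) ∧
  Q.head.rel ∉ σ.rels ∧ Q.head.vars ⊆ varsOf Q.body

/-- A database is a set of facts (finiteness is imposed where needed). -/
abbrev Database := Set Atom

/-- A database over a schema. -/
def isDBOver (σ : Schema) (D : Database) : Prop := ∀ F ∈ D, atomOver σ F

/-- The result of a conjunctive query on a database. -/
def evalCQ (Q : CQ) (D : Database) : Set Atom :=
  { F | ∃ ν : ℕ → ℕ, (∀ A ∈ Q.body, mapAtom ν A ∈ D) ∧ mapAtom ν Q.head = F }

/-- Containment of conjunctive queries. -/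
def containedCQ (Q1 Q2 : CQ) : Prop :=
  ∀ D : Database, D.Finite → evalCQ Q1 D ⊆ evalCQ Q2 D

/-- Equivalence of conjunctive queries. -/
def equivCQ (Q1 Q2 : CQ) : Prop :=
  ∀ D : Database, D.Finite → evalCQ Q1 D = evalCQ Q2 D

/-- A conjunctive query is minimal if no equivalent CQ has strictly fewer body atoms. -/
def isMinimal (Q : CQ) : Prop :=
  ∀ Q2 : CQ, equivCQ Q Q2 → Q.body.card ≤ Q2.body.card

/-- A homomorphism from `Q2` to `Q1`. -/
def isHom (h : ℕ → ℕ) (Q2 Q1 : CQ) : Prop :=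
  (∀ A ∈ Q2.body, mapAtom h A ∈ Q1.body) ∧ mapAtom h Q2.head = Q1.head

/-- A body homomorphism from `Q2` to `Q1`. -/
def isBodyHom (h : ℕ → ℕ) (Q2 Q1 : CQ) : Prop :=
  ∀ A ∈ Q2.body, mapAtom h A ∈ Q1.body

/-- A set of views over σ: each view is a CQ over σ and views have
pairwise distinct head relation symbols. -/
def isViewSet (σ : Schema) (𝒱 : Finset CQ) : Prop :=
  (∀ V ∈ 𝒱, isCQ σ V) ∧
  ∀ V ∈ 𝒱, ∀ W ∈ 𝒱, V ≠ W → V.head.rel ≠ W.head.rel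

/-- The 𝒱-defined database 𝒱(D). -/
def viewDB (𝒱 : Finset CQ) (D : Database) : Database :=
  ⋃ V ∈ 𝒱, evalCQ V D

/-- `Q'` is a CQ over the schema σ_𝒱 of the head relations of the views 𝒱. -/
def overViews (𝒱 : Finset CQ) (Q' : CQ) : Prop :=
  Q'.body.Nonempty ∧
  (∀ A ∈ Q'.body, ∃ V ∈ 𝒱, A.rel = V.head.rel ∧ A.args.length = V.head.args.length) ∧
  (∀ V ∈ 𝒱, Q'.head.rel ≠ V.head.rel) ∧
  Q'.head.vars ⊆ varsOf Q'.body

/-- `Q'` is a 𝒱-rewriting of `Q`: `Q'` is over σ_𝒱 and `Q'(𝒱(D)) = Q(D)`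
for every (finite) database `D` over σ. -/
def isRewriting (σ : Schema) (𝒱 : Finset CQ) (Q Q' : CQ) : Prop :=
  overViews 𝒱 Q' ∧
  ∀ D : Database, D.Finite → isDBOver σ D →
    evalCQ Q' (viewDB 𝒱 D) = evalCQ Q D

/-- `T` is a join tree for the atom set `B`. -/
def joinTreeProp (B : Finset Atom) (T : SimpleGraph {A : Atom // A ∈ B}) : Prop :=
  T.IsTree ∧
  ∀ (x : ℕ) (A A' : {A : Atom // A ∈ B}) (p : T.Walk A A'), p.IsPath →
    x ∈ A.1.vars → x ∈ A'.1.vars → ∀ C ∈ p.support, x ∈ C.1.vars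

/-- The atom set `B` has a join tree. -/
def hasJoinTree (B : Finset Atom) : Prop :=
  ∃ T : SimpleGraph {A : Atom // A ∈ B}, joinTreeProp B T

/-- A conjunctive query is acyclic if its body has a join tree. -/
def isAcyclicCQ (Q : CQ) : Prop := hasJoinTree Q.body

/-- A conjunctive query is free-connex acyclic. -/
def isFreeConnex (Q : CQ) : Prop :=
  isAcyclicCQ Q ∧ hasJoinTree (insert Q.head Q.body)

/-- The bridge variables of `𝒜 ⊆ body(Q)`. -/
def bvars (Q : CQ) (𝒜 : Finset Atom) : Finset ℕ :=
  varsOf 𝒜 ∩ (Q.head.vars ∪ varsOf (Q.body \ 𝒜))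

/-- An application of a view `V`: a substitution that does not unify any
quantified variable of `V` with another variable of `V`. -/
def isApplication (V : CQ) (α : ℕ → ℕ) : Prop :=
  ∀ x ∈ varsOf V.body, x ∉ V.head.vars →
    ∀ y ∈ CQ.vars V, y ≠ x → α x ≠ α y

/-- The query α(V). -/
def applyCQ (α : ℕ → ℕ) (V : CQ) : CQ :=
  ⟨mapAtom α V.head, V.body.image (mapAtom α)⟩

/-- `(𝒜, V, α, ψ)` is a cover description for `Q`. -/
def isCoverDesc (Q : CQ) (𝒜 : Finset Atom) (V : CQ) (α ψ : ℕ → ℕ) : Prop :=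
  𝒜 ⊆ Q.body ∧ isApplication V α ∧
  𝒜 ⊆ V.body.image (mapAtom α) ∧
  bvars Q 𝒜 ⊆ V.head.vars.image α ∧
  isBodyHom ψ (applyCQ α V) Q ∧
  ∀ x ∈ varsOf 𝒜, ψ x = x

/-- A cover partition for `Q` over `𝒱`: a collection of cover descriptions
whose atom sets partition `body(Q)`. -/
def isCoverPartition (Q : CQ) (𝒱 : Finset CQ) (m : ℕ)
    (𝒜 : Fin m → Finset Atom) (V : Fin m → CQ) (α ψ : Fin m → ℕ → ℕ) : Prop :=
  (∀ i, V i ∈ 𝒱 ∧ isCoverDesc Q (𝒜 i) (V i) (α i) (ψ i)) ∧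
  ∀ A ∈ Q.body, ∃! i, A ∈ 𝒜 i

/-- Consistency of a cover partition: a variable of any `α_j(V_j)` lies in the
range of another `α_i` only if it also lies in `bvars(𝒜_j)`. -/
def isConsistent (Q : CQ) (m : ℕ) (𝒜 : Fin m → Finset Atom) (V : Fin m → CQ)
    (α : Fin m → ℕ → ℕ) : Prop :=
  ∀ i j : Fin m, i ≠ j → ∀ z ∈ CQ.vars (applyCQ (α j) (V j)),
    (∃ x ∈ CQ.vars (V i), α i x = z) → z ∈ bvars Q (𝒜 j)

/-- The query `Q_𝒞` induced by a (consistent) cover partition. -/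
def inducedCQ (Q : CQ) (m : ℕ) (V : Fin m → CQ) (α : Fin m → ℕ → ℕ) : CQ :=
  ⟨Q.head, Finset.image (fun i => mapAtom (α i) (V i).head) Finset.univ⟩

/-- Quantified variable disjointness for a family of view applications. -/
def QVD (m : ℕ) (V : Fin m → CQ) (α : Fin m → ℕ → ℕ) : Prop :=
  ∀ i j : Fin m, i ≠ j → ∀ x ∈ varsOf (V i).body, x ∉ (V i).head.vars →
    ∀ y ∈ CQ.vars (V j), α i x ≠ α j y

/-- `QE` is an expansion of `Q'` with respect to the views `𝒱`. -/
def isExpansion (𝒱 : Finset CQ) (Q' QE : CQ) : Prop :=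
  ∃ (m : ℕ) (A' : Fin m → Atom) (V : Fin m → CQ) (α : Fin m → ℕ → ℕ),
    (∀ i, V i ∈ 𝒱 ∧ isApplication (V i) (α i) ∧ A' i = mapAtom (α i) (V i).head) ∧
    Q'.body = Finset.image A' Finset.univ ∧
    QVD m V α ∧
    QE.head = Q'.head ∧
    QE.body = Finset.biUnion Finset.univ (fun i => (V i).body.image (mapAtom (α i)))

/-- `atoms(x)`: the body atoms of `Q` containing the variable `x`. -/
def atomsWith (Q : CQ) (x : ℕ) : Finset Atom :=
  Q.body.filter (fun A => x ∈ A.vars)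

/-- Hierarchical conjunctive queries. -/
def isHierarchical (Q : CQ) : Prop :=
  ∀ x y : ℕ, atomsWith Q x ⊆ atomsWith Q y ∨ atomsWith Q y ⊆ atomsWith Q x ∨
    atomsWith Q x ∩ atomsWith Q y = ∅

/-- q-hierarchical conjunctive queries. -/
def isQHierarchical (Q : CQ) : Prop :=
  isHierarchical Q ∧ ∀ x y : ℕ, atomsWith Q x ⊂ atomsWith Q y →
    x ∈ Q.head.vars → y ∈ Q.head.vars

/-- `P` is a partition of `body(Q)` witnessing weak head arity at most `k`. -/
def witnessesWHA (Q : CQ) (k n : ℕ) (P : Fin n → Finset Atom) : Prop :=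
  (∀ i, (P i).Nonempty) ∧ (∀ i, P i ⊆ Q.body) ∧ (∀ A ∈ Q.body, ∃! i, A ∈ P i) ∧
  (∀ i, (varsOf (P i) ∩ Q.head.vars).card ≤ k) ∧
  (∀ i j, i ≠ j → ∀ x ∈ varsOf (P i), x ∈ varsOf (P j) → x ∈ Q.head.vars)

/-- `Q` has weak head arity at most `k`. -/
def hasWHAle (Q : CQ) (k : ℕ) : Prop := ∃ n P, witnessesWHA Q k n P

/-- The weak head arity of `Q`. -/
noncomputable def weakHeadArity (Q : CQ) : ℕ := sInf {k | hasWHAle Q k}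

/-- The cover graph of `Q`: vertices are the body atoms, with an edge between
two atoms iff they share a variable not occurring in the head. -/
def coverGraph (Q : CQ) : SimpleGraph {A : Atom // A ∈ Q.body} :=
  SimpleGraph.fromRel (fun A B => ∃ x, x ∈ A.1.vars ∧ x ∈ B.1.vars ∧ x ∉ Q.head.vars)

/-- A subset `s` of the atom set `B` is connected in the (join) tree `T`. -/
def connectedIn (B : Finset Atom) (T : SimpleGraph {A : Atom // A ∈ B}) (s : Finset Atom) : Prop :=
  (T.induce {A : {A : Atom // A ∈ B} | A.1 ∈ s}).Connected

/-- The Boolean query `Q` derived from a 3CNF formula with `k` clauses and `n`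
propositions. Variables: `f = 0`, `t = 1`, `u = 2`. Relation symbols: `Form = 0`,
`Clause_j = 1 + j`, `Neg_i = 1 + k + i`; head symbol `1 + k + n`. -/
def satQuery (n k : ℕ) : CQ :=
  ⟨⟨1 + k + n, []⟩,
    {(⟨0, [0, 1, 2]⟩ : Atom)} ∪
    Finset.image (fun j : Fin k => (⟨1 + j.val, [0, 1, 2]⟩ : Atom)) Finset.univ ∪
    Finset.image (fun j : Fin k => (⟨1 + j.val, [1, 0, 2]⟩ : Atom)) Finset.univ ∪
    Finset.image (fun i : Fin n => (⟨1 + k + i.val, [0, 1, 2]⟩ : Atom)) Finset.univ ∪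
    Finset.image (fun i : Fin n => (⟨1 + k + i.val, [1, 0, 2]⟩ : Atom)) Finset.univ⟩

/-- The view `V` derived from a 3CNF formula `φ` with clauses `φ_j` (for `j : Fin k`)
each consisting of three literals `lit j p = (i, b)` (meaning `x_i` if `b = true` and
`¬x_i` if `b = false`). Variables: `f = 0`, `t = 1`, `u = 2`, `x_i = 3 + 2i`,
`x̄_i = 4 + 2i`. Head: `H(f, t, x_1, x̄_1, …, x_n, x̄_n)` with head symbol `2 + k + n`. -/
def satView (n k : ℕ) (lit : Fin k → Fin 3 → Fin n × Bool) : CQ :=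
  ⟨⟨2 + k + n, 0 :: 1 :: (List.range n).flatMap (fun i => [3 + 2 * i, 4 + 2 * i])⟩,
    {(⟨0, [0, 1, 2]⟩ : Atom)} ∪
    Finset.image (fun j : Fin k => (⟨1 + j.val, [0, 1, 2]⟩ : Atom)) Finset.univ ∪
    Finset.image (fun i : Fin n =>
      (⟨1 + k + i.val, [3 + 2 * i.val, 4 + 2 * i.val, 2]⟩ : Atom)) Finset.univ ∪
    Finset.image (fun i : Fin n =>
      (⟨1 + k + i.val, [4 + 2 * i.val, 3 + 2 * i.val, 2]⟩ : Atom)) Finset.univ ∪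
    Finset.image (fun ji : Fin k × Fin n =>
        (⟨1 + ji.1.val, [3 + 2 * ji.2.val, 4 + 2 * ji.2.val, 2]⟩ : Atom))
      (Finset.univ.filter (fun ji : Fin k × Fin n => ∃ p : Fin 3, lit ji.1 p = (ji.2, true))) ∪
    Finset.image (fun ji : Fin k × Fin n =>
        (⟨1 + ji.1.val, [4 + 2 * ji.2.val, 3 + 2 * ji.2.val, 2]⟩ : Atom))
      (Finset.univ.filter (fun ji : Fin k × Fin n => ∃ p : Fin 3, lit ji.1 p = (ji.2, false)))⟩

lemma isHierarchical_of_common_var (Q : CQ) (u : ℕ) (hu : ∀ A ∈ Q.body, u ∈ A.vars)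
    (hblock : ∀ x y, x ≠ u → y ≠ u → ∀ A ∈ Q.body, ∀ B ∈ Q.body,
      x ∈ A.vars → y ∈ A.vars → x ∈ B.vars → y ∈ B.vars) :
    isHierarchical Q := by
  have atomsWith_u : ∀ z, atomsWith Q z ⊆ atomsWith Q u := fun z B hB => by
    simp only [atomsWith, Finset.mem_filter] at hB ⊢
    exact ⟨hB.1, hu B hB.1⟩
  intro x y
  by_cases hx : x = u
  · exact Or.inr (Or.inl (hx ▸ atomsWith_u y))
  by_cases hy : y = u
  · exact Or.inl (hy ▸ atomsWith_u x)
  by_cases hxy : atomsWith Q x ∩ atomsWith Q y = ∅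
  · exact Or.inr (Or.inr hxy)
  obtain ⟨A, hA⟩ := Finset.nonempty_iff_ne_empty.mpr hxy
  simp only [Finset.mem_inter, atomsWith, Finset.mem_filter] at hA
  refine Or.inl fun B hB => ?_
  simp only [atomsWith, Finset.mem_filter] at hB ⊢
  exact ⟨hB.1, hblock x y hx hy A hA.1.1 B hB.1 hA.1.2 hA.2.2 hB.2⟩

lemma mapAtom_id (A : Atom) : mapAtom id A = A := by
  simp [mapAtom]

lemma bvars_body_subset_head (Q : CQ) : bvars Q Q.body ⊆ Q.head.vars := by
  intro x hx
  simpa [bvars, varsOf] using (Finset.mem_inter.mp hx).2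

lemma isCoverDesc_body_id {Q V : CQ} {α : ℕ → ℕ} (happ : isApplication V α)
    (hhead : Q.head.vars ⊆ V.head.vars.image α)
    (hsurj : Q.body ⊆ V.body.image (mapAtom α))
    (hmaps : ∀ B ∈ V.body, mapAtom α B ∈ Q.body) :
    isCoverDesc Q Q.body V α id := by
  refine ⟨subset_rfl, happ, hsurj, (bvars_body_subset_head Q).trans hhead, ?_, fun _ _ => rfl⟩
  intro A hA
  obtain ⟨B, hB, rfl⟩ := Finset.mem_image.mp hA
  rw [mapAtom_id]
  exact hmaps B hB

section SatReduction

variable {n k : ℕ} {lit : Fin k → Fin 3 → Fin n × Bool}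

lemma mem_satQuery_body {A : Atom} :
    A ∈ (satQuery n k).body ↔
      A = ⟨0, [0, 1, 2]⟩ ∨ (∃ j : Fin k, A = ⟨1 + j, [0, 1, 2]⟩) ∨
      (∃ j : Fin k, A = ⟨1 + j, [1, 0, 2]⟩) ∨
      (∃ i : Fin n, A = ⟨1 + k + i, [0, 1, 2]⟩) ∨
      (∃ i : Fin n, A = ⟨1 + k + i, [1, 0, 2]⟩) := by
  simp [satQuery, eq_comm]

lemma mem_satView_body {A : Atom} :
    A ∈ (satView n k lit).body ↔
      A = ⟨0, [0, 1, 2]⟩ ∨ (∃ j : Fin k, A = ⟨1 + j, [0, 1, 2]⟩) ∨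
      (∃ i : Fin n, A = ⟨1 + k + i, [3 + 2 * i, 4 + 2 * i, 2]⟩) ∨
      (∃ i : Fin n, A = ⟨1 + k + i, [4 + 2 * i, 3 + 2 * i, 2]⟩) ∨
      (∃ j : Fin k, ∃ i : Fin n, (∃ p, lit j p = (i, true)) ∧
        A = ⟨1 + j, [3 + 2 * i, 4 + 2 * i, 2]⟩) ∨
      (∃ j : Fin k, ∃ i : Fin n, (∃ p, lit j p = (i, false)) ∧
        A = ⟨1 + j, [4 + 2 * i, 3 + 2 * i, 2]⟩) := by
  simp [satView, Prod.exists, eq_comm, and_comm]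

lemma satQuery_args {A : Atom} (h : A ∈ (satQuery n k).body) :
    A.args = [0, 1, 2] ∨ A.args = [1, 0, 2] := by
  rcases mem_satQuery_body.mp h with h | ⟨j, h⟩ | ⟨j, h⟩ | ⟨i, h⟩ | ⟨i, h⟩ <;> simp [h]

lemma satView_args {A : Atom} (h : A ∈ (satView n k lit).body) :
    A.args = [0, 1, 2] ∨ ∃ i < n,
      A.args = [3 + 2 * i, 4 + 2 * i, 2] ∨ A.args = [4 + 2 * i, 3 + 2 * i, 2] := by
  rcases mem_satView_body.mp h with h | ⟨j, h⟩ | ⟨i, h⟩ | ⟨i, h⟩ | ⟨j, i, -, h⟩ | ⟨j, i, -, h⟩ <;>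
    simp only [h, true_or] <;> exact Or.inr ⟨i, i.isLt, by simp⟩

theorem satQuery_isHierarchical : isHierarchical (satQuery n k) := by
  refine isHierarchical_of_common_var _ 2 (fun A hA => ?_) fun x y hx hy A hA B hB hxA hyA hxB => ?_
  · rcases satQuery_args hA with h | h <;> simp [Atom.vars, h]
  · rcases satQuery_args hA with h | h <;> rcases satQuery_args hB with h' | h' <;>
      simp [Atom.vars, h, h'] at hyA ⊢ <;> omega

theorem satView_isHierarchical : isHierarchical (satView n k lit) := by
  refine isHierarchical_of_common_var _ 2 (fun A hA => ?_) fun x y hx hy A hA B hB hxA hyA hxB => ?_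
  · rcases satView_args hA with h | ⟨i, -, h | h⟩ <;> simp [Atom.vars, h]
  · rcases satView_args hA with h | ⟨i, -, h | h⟩ <;>
      rcases satView_args hB with h' | ⟨i', -, h' | h'⟩ <;>
      simp [Atom.vars, h, h'] at hxA hyA hxB ⊢ <;> omega

lemma mem_satView_head_vars {x : ℕ} :
    x ∈ (satView n k lit).head.vars ↔
      x = 0 ∨ x = 1 ∨ ∃ i < n, x = 3 + 2 * i ∨ x = 4 + 2 * i := by
  simp [satView, Atom.vars, List.mem_flatMap]

lemma varsOf_satView_body_subset :
    varsOf (satView n k lit).body ⊆ insert 2 (satView n k lit).head.vars := by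
  intro x hx
  obtain ⟨A, hA, hxA⟩ := Finset.mem_biUnion.mp hx
  rw [Finset.mem_insert, mem_satView_head_vars]
  rcases satView_args hA with h | ⟨i, hi, h | h⟩ <;>
    simp only [Atom.vars, h, List.mem_toFinset, List.mem_cons, List.not_mem_nil, or_false] at hxA
  · omega
  all_goals
    by_cases hx2 : x = 2
    · exact Or.inl hx2
    · exact Or.inr (Or.inr (Or.inr ⟨i, hi, by omega⟩))

/-- The substitution of `V` encoding a truth assignment `τ`: `f, t, u` are fixed and the
pair `x_i, x̄_i` goes to `t, f` or `f, t` according to `τ i`. Variables beyond `x̄_n` are junk. -/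
def truthSubst (τ : Fin n → Bool) (x : ℕ) : ℕ :=
  if x < 3 then x
  else
    let b := if h : (x - 3) / 2 < n then τ ⟨(x - 3) / 2, h⟩ else false
    if x % 2 = 1 then b.toNat else (!b).toNat

lemma truthSubst_of_lt {τ : Fin n → Bool} {x : ℕ} (hx : x < 3) : truthSubst τ x = x := if_pos hx

lemma truthSubst_pos (τ : Fin n → Bool) (i : Fin n) :
    truthSubst τ (3 + 2 * i) = (τ i).toNat := by
  simp [truthSubst, Nat.add_mod]

lemma truthSubst_neg (τ : Fin n → Bool) (i : Fin n) :
    truthSubst τ (4 + 2 * i) = (!τ i).toNat := by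
  have h : (4 + 2 * (i : ℕ) - 3) / 2 = i := by omega
  rw [truthSubst, if_neg (by omega)]
  simp [h, Nat.add_mod]

lemma truthSubst_le_one (τ : Fin n → Bool) {x : ℕ} (hx : 3 ≤ x) : truthSubst τ x ≤ 1 := by
  rw [truthSubst, if_neg (by omega)]
  split_ifs <;> exact Bool.toNat_le _

lemma truthSubst_eq_two_iff (τ : Fin n → Bool) {x : ℕ} : truthSubst τ x = 2 ↔ x = 2 := by
  rcases lt_or_ge x 3 with hx | hx
  · rw [truthSubst_of_lt hx]
  · have := truthSubst_le_one τ hx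
    omega

lemma clause_mem_satQuery_body (j : Fin k) (b : Bool) :
    (⟨1 + j, [b.toNat, (!b).toNat, 2]⟩ : Atom) ∈ (satQuery n k).body := by
  cases b <;> simp [mem_satQuery_body]

lemma neg_mem_satQuery_body (i : Fin n) (b : Bool) :
    (⟨1 + k + i, [b.toNat, (!b).toNat, 2]⟩ : Atom) ∈ (satQuery n k).body := by
  cases b <;> simp [mem_satQuery_body]

lemma mapAtom_truthSubst_mem_satQuery_body (τ : Fin n → Bool) {B : Atom}
    (hB : B ∈ (satView n k lit).body) : mapAtom (truthSubst τ) B ∈ (satQuery n k).body := by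
  rcases mem_satView_body.mp hB with rfl | ⟨j, rfl⟩ | ⟨i, rfl⟩ | ⟨i, rfl⟩ | ⟨j, i, -, rfl⟩ |
      ⟨j, i, -, rfl⟩ <;>
    simp only [mapAtom, List.map_cons, List.map_nil, truthSubst_pos, truthSubst_neg,
      truthSubst_of_lt, Nat.reduceLT]
  · simp [mem_satQuery_body]
  · simp [mem_satQuery_body]
  · exact neg_mem_satQuery_body i (τ i)
  · simpa using neg_mem_satQuery_body (k := k) i (!τ i)
  · exact clause_mem_satQuery_body j (τ i)
  · simpa using clause_mem_satQuery_body (n := n) j (!τ i)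

lemma neg_mem_image_truthSubst (τ : Fin n → Bool) (i : Fin n) (b : Bool) :
    (⟨1 + k + i, [b.toNat, (!b).toNat, 2]⟩ : Atom) ∈
      (satView n k lit).body.image (mapAtom (truthSubst τ)) := by
  rw [Finset.mem_image]
  by_cases hi : τ i = b
  · refine ⟨_, mem_satView_body.mpr (Or.inr (Or.inr (Or.inl ⟨i, rfl⟩))), ?_⟩
    simp [mapAtom, truthSubst_pos, truthSubst_neg, hi, truthSubst_of_lt]
  · refine ⟨_, mem_satView_body.mpr (Or.inr (Or.inr (Or.inr (Or.inl ⟨i, rfl⟩)))), ?_⟩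
    simp [mapAtom, truthSubst_pos, truthSubst_neg, Bool.eq_not_of_ne hi, truthSubst_of_lt]

lemma satQuery_body_subset_image_truthSubst {τ : Fin n → Bool}
    (hτ : ∀ j : Fin k, ∃ p : Fin 3, τ (lit j p).1 = (lit j p).2) :
    (satQuery n k).body ⊆ (satView n k lit).body.image (mapAtom (truthSubst τ)) := by
  intro A hA
  rw [Finset.mem_image]
  rcases mem_satQuery_body.mp hA with rfl | ⟨j, rfl⟩ | ⟨j, rfl⟩ | ⟨i, rfl⟩ | ⟨i, rfl⟩
  · refine ⟨_, mem_satView_body.mpr (Or.inl rfl), ?_⟩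
    simp [mapAtom, truthSubst_of_lt]
  · refine ⟨_, mem_satView_body.mpr (Or.inr (Or.inl ⟨j, rfl⟩)), ?_⟩
    simp [mapAtom, truthSubst_of_lt]
  · obtain ⟨p, hp⟩ := hτ j
    rcases hl : lit j p with ⟨i, b⟩
    rw [hl] at hp
    cases b
    · refine ⟨_, mem_satView_body.mpr (Or.inr (Or.inr (Or.inr (Or.inr (Or.inr
        ⟨j, i, ⟨p, hl⟩, rfl⟩))))), ?_⟩
      simp [mapAtom, truthSubst_pos, truthSubst_neg, truthSubst_of_lt, hp]
    · refine ⟨_, mem_satView_body.mpr (Or.inr (Or.inr (Or.inr (Or.inr (Or.inl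
        ⟨j, i, ⟨p, hl⟩, rfl⟩))))), ?_⟩
      simp [mapAtom, truthSubst_pos, truthSubst_neg, truthSubst_of_lt, hp]
  · simpa using neg_mem_image_truthSubst (lit := lit) τ i false
  · simpa using neg_mem_image_truthSubst (lit := lit) τ i true

lemma isApplication_truthSubst (τ : Fin n → Bool) :
    isApplication (satView n k lit) (truthSubst τ) := by
  intro x hx hxh y _ hyx
  have hx2 : x = 2 := by simpa [hxh] using varsOf_satView_body_subset hx
  subst hx2
  rw [truthSubst_of_lt (by omega), ne_comm, Ne, truthSubst_eq_two_iff]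
  exact hyx

theorem isCoverDesc_truthSubst {τ : Fin n → Bool}
    (hτ : ∀ j : Fin k, ∃ p : Fin 3, τ (lit j p).1 = (lit j p).2) :
    isCoverDesc (satQuery n k) (satQuery n k).body (satView n k lit) (truthSubst τ) id :=
  isCoverDesc_body_id (isApplication_truthSubst τ) (by simp [satQuery, Atom.vars])
    (satQuery_body_subset_image_truthSubst hτ) fun _ => mapAtom_truthSubst_mem_satQuery_body τ

def truthAssignment (α : ℕ → ℕ) : Fin n → Bool := fun i => decide (α (3 + 2 * i) = 1)

lemma apply_zero_of_mapAtom_eq_form {α : ℕ → ℕ} {B : Atom} (hB : B ∈ (satView n k lit).body)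
    (hα : mapAtom α B = ⟨0, [0, 1, 2]⟩) : α 0 = 0 := by
  rcases mem_satView_body.mp hB with rfl | ⟨j, rfl⟩ | ⟨i, rfl⟩ | ⟨i, rfl⟩ | ⟨j, i, -, rfl⟩ |
      ⟨j, i, -, rfl⟩ <;> simp [mapAtom] at hα
  exact hα.1

lemma exists_sat_literal_of_mapAtom_eq_clause {α : ℕ → ℕ} (hα0 : α 0 = 0) {B : Atom}
    (hB : B ∈ (satView n k lit).body) {j : Fin k} (hα : mapAtom α B = ⟨1 + j, [1, 0, 2]⟩) :
    ∃ p : Fin 3, truthAssignment α (lit j p).1 = (lit j p).2 := by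
  rcases mem_satView_body.mp hB with rfl | ⟨j', rfl⟩ | ⟨i, rfl⟩ | ⟨i, rfl⟩ |
      ⟨j', i, ⟨p, hp⟩, rfl⟩ | ⟨j', i, ⟨p, hp⟩, rfl⟩ <;>
    simp only [mapAtom, Atom.mk.injEq, List.map_cons, List.map_nil, List.cons.injEq,
      and_true] at hα
  · omega
  · omega
  · omega
  · omega
  · obtain rfl : j' = j := Fin.ext (by omega)
    exact ⟨p, by simp [hp, truthAssignment, hα.2.1]⟩
  · obtain rfl : j' = j := Fin.ext (by omega)
    exact ⟨p, by simp [hp, truthAssignment, hα.2.2.1]⟩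

theorem satisfiable_of_isCoverDesc {α ψ : ℕ → ℕ}
    (h : isCoverDesc (satQuery n k) (satQuery n k).body (satView n k lit) α ψ) :
    ∃ τ : Fin n → Bool, ∀ j : Fin k, ∃ p : Fin 3, τ (lit j p).1 = (lit j p).2 := by
  obtain ⟨-, -, hcover, -⟩ := h
  have hpre : ∀ A ∈ (satQuery n k).body, ∃ B ∈ (satView n k lit).body, mapAtom α B = A :=
    fun A hA => Finset.mem_image.mp (hcover hA)
  obtain ⟨B₀, hB₀, hform⟩ := hpre _ (mem_satQuery_body.mpr (Or.inl rfl))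
  refine ⟨truthAssignment α, fun j => ?_⟩
  obtain ⟨B, hB, hclause⟩ := hpre _ (mem_satQuery_body.mpr (Or.inr (Or.inr (Or.inl ⟨j, rfl⟩))))
  exact exists_sat_literal_of_mapAtom_eq_clause (apply_zero_of_mapAtom_eq_form hB₀ hform) hB
    hclause

end SatReduction

/-- `Q` and `V` are hierarchical, and the 3CNF formula `φ` (given by its
literal table `lit`) is satisfiable iff there are an application `α` of `V` and a
mapping `ψ` such that `(body(Q), V, α, ψ)` is a cover description for `Q`. -/
theorem statement18 (n k : ℕ) (lit : Fin k → Fin 3 → Fin n × Bool) :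
    isHierarchical (satQuery n k) ∧ isHierarchical (satView n k lit) ∧
    ((∃ τ : Fin n → Bool, ∀ j : Fin k, ∃ p : Fin 3, τ (lit j p).1 = (lit j p).2) ↔
      ∃ α ψ : ℕ → ℕ, isCoverDesc (satQuery n k) (satQuery n k).body (satView n k lit) α ψ) :=
  ⟨satQuery_isHierarchical, satView_isHierarchical,
    fun ⟨_, hτ⟩ => ⟨_, id, isCoverDesc_truthSubst hτ⟩,
    fun ⟨_, _, h⟩ => satisfiable_of_isCoverDesc h⟩
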